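/- arXiv:2412.16226 — 2 statements merged into one kernel-verified Lean document; each statement's English description precedes it below -/
import Mathlib

section
/- Farkas' Lemma (entailment direction): Let Φ be a satisfiable system of m linear inequalities a_{i,0} + a_{i,1}·x_1 + … + a_{i,r}·x_r ≥ 0 over real variables x_1,…,x_r. Then Φ entails the linear inequality c_0 + c_1·x_1 + … + c_r·x_r ≥ 0 (i.e., every point satisfying all inequalities of Φ satisfies it) if and only if there exist non-negative reals y_0, y_1, …, y_m such that c_0 = y_0 + Σ_{i=1}^m y_i·a_{i,0} and c_j = Σ_{i=1}^m y_i·a_{i,j} for all 1 ≤ j ≤ r. -/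
noncomputable def farkasDot {n : ℕ} (u w : Fin n → ℝ) : ℝ := ∑ k, u k * w k

lemma farkasDot_self_nonpos {n : ℕ} (u : Fin n → ℝ) (h : farkasDot u u ≤ 0) : u = 0 := by
  funext k
  have h1 : ∀ k ∈ Finset.univ, 0 ≤ u k * u k := fun k _ => mul_self_nonneg _
  have h2 : farkasDot u u = 0 := le_antisymm h (Finset.sum_nonneg h1)
  have := (Finset.sum_eq_zero_iff_of_nonneg h1).mp h2 k (Finset.mem_univ k)
  simpa using mul_self_eq_zero.mp this

lemma farkas_conic {n : ℕ} : ∀ (m : ℕ) (v : Fin m → Fin n → ℝ) (c : Fin n → ℝ),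
    (∀ z : Fin n → ℝ, (∀ i, 0 ≤ farkasDot (v i) z) → 0 ≤ farkasDot c z) →
    ∃ y : Fin m → ℝ, (∀ i, 0 ≤ y i) ∧ ∀ k, c k = ∑ i, y i * v i k := by
  intro m
  induction m with
  | zero =>
    intro v c h
    have hc : c = 0 := by
      apply farkasDot_self_nonpos
      have := h (fun k => -c k) (fun i => i.elim0)
      have he : farkasDot c (fun k => -c k) = -farkasDot c c := by
        simp [farkasDot, Finset.sum_neg_distrib]
      rw [he] at this; linarith
    exact ⟨fun i => i.elim0, fun i => i.elim0, fun k => by simp [hc]⟩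
  | succ m ih =>
    intro v c h
    by_cases hm : ∀ z : Fin n → ℝ, (∀ i : Fin m, 0 ≤ farkasDot (v i.castSucc) z) →
        0 ≤ farkasDot c z
    · obtain ⟨y, hy, hc⟩ := ih (fun i => v i.castSucc) c hm
      refine ⟨Fin.snoc y 0, ?_, ?_⟩
      · intro i
        refine Fin.lastCases ?_ ?_ i
        · simp
        · intro i; simpa using hy i
      · intro k
        rw [Fin.sum_univ_castSucc]
        simp [hc k]
    · push_neg at hm
      obtain ⟨z, hz, hcz⟩ := hm
      have hd : farkasDot (v (Fin.last m)) z < 0 := by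
        by_contra hd
        push_neg at hd
        refine absurd (h z ?_) (not_le.mpr hcz)
        intro i
        exact Fin.lastCases hd (fun i => hz i) i
      set d := farkasDot (v (Fin.last m)) z with hd_def
      have hdne : d ≠ 0 := ne_of_lt hd
      set v' : Fin m → Fin n → ℝ :=
        fun i k => v i.castSucc k - (farkasDot (v i.castSucc) z / d) * v (Fin.last m) k with hv'
      set c' : Fin n → ℝ := fun k => c k - (farkasDot c z / d) * v (Fin.last m) k with hc'
      have key : ∀ u w : Fin n → ℝ,
          farkasDot (fun k => u k - (farkasDot u z / d) * v (Fin.last m) k) w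
            = farkasDot u (fun k => w k - (farkasDot (v (Fin.last m)) w / d) * z k) := by
        intro u w
        have L : farkasDot (fun k => u k - (farkasDot u z / d) * v (Fin.last m) k) w
            = farkasDot u w - farkasDot u z / d * farkasDot (v (Fin.last m)) w := by
          simp only [farkasDot, Finset.mul_sum, ← Finset.sum_sub_distrib]
          exact Finset.sum_congr rfl (fun k _ => by ring)
        have R : farkasDot u (fun k => w k - (farkasDot (v (Fin.last m)) w / d) * z k)
            = farkasDot u w - farkasDot (v (Fin.last m)) w / d * farkasDot u z := by
          simp only [farkasDot, Finset.mul_sum, ← Finset.sum_sub_distrib]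
          exact Finset.sum_congr rfl (fun k _ => by ring)
        rw [L, R]; ring
      have hstep : ∀ w : Fin n → ℝ,
          (∀ i : Fin m, 0 ≤ farkasDot (v' i) w) → 0 ≤ farkasDot c' w := by
        intro w hw
        rw [hc', key c w]
        apply h
        intro i
        refine Fin.lastCases ?_ ?_ i
        · rw [← key (v (Fin.last m)) w, ← hd_def, div_self hdne]
          have : (fun k => v (Fin.last m) k - 1 * v (Fin.last m) k) = fun _ => (0:ℝ) := by
            funext k; ring
          rw [this]
          simp [farkasDot]
        · intro i
          rw [← key (v i.castSucc) w]
          exact hw i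
      obtain ⟨y, hy, hrep⟩ := ih v' c' hstep
      set lam : ℝ := (farkasDot c z - ∑ i, y i * farkasDot (v i.castSucc) z) / d with hlam
      have hlam_pos : 0 ≤ lam := by
        have hs : 0 ≤ ∑ i, y i * farkasDot (v i.castSucc) z :=
          Finset.sum_nonneg fun i _ => mul_nonneg (hy i) (hz i)
        rw [hlam]
        exact div_nonneg_iff.mpr (Or.inr ⟨by linarith, le_of_lt hd⟩)
      refine ⟨Fin.snoc y lam, ?_, ?_⟩
      · intro i
        refine Fin.lastCases ?_ ?_ i
        · simpa using hlam_pos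
        · intro i; simpa using hy i
      · intro k
        rw [Fin.sum_univ_castSucc]
        simp only [Fin.snoc_castSucc, Fin.snoc_last]
        have h1 : c k = c' k + (farkasDot c z / d) * v (Fin.last m) k := by
          rw [hc']; ring
        have h2 : ∑ i : Fin m, y i * v i.castSucc k
            = ∑ i : Fin m, y i * v' i k
              + (∑ i : Fin m, y i * farkasDot (v i.castSucc) z) / d * v (Fin.last m) k := by
          rw [Finset.sum_div, Finset.sum_mul, ← Finset.sum_add_distrib]
          refine Finset.sum_congr rfl (fun i _ => ?_)
          rw [hv']
          field_simp
          ring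
        rw [h1, hrep k, h2, hlam]
        ring

/-- Farkas' Lemma (entailment direction). -/
theorem farkas_entailment (r m : ℕ) (a : Fin m → Fin r → ℝ) (a0 : Fin m → ℝ)
    (c : Fin r → ℝ) (c0 : ℝ)
    (hsat : ∃ x : Fin r → ℝ, ∀ i, 0 ≤ a0 i + ∑ j, a i j * x j) :
    (∀ x : Fin r → ℝ, (∀ i, 0 ≤ a0 i + ∑ j, a i j * x j) → 0 ≤ c0 + ∑ j, c j * x j)
      ↔ ∃ (y0 : ℝ) (y : Fin m → ℝ), 0 ≤ y0 ∧ (∀ i, 0 ≤ y i) ∧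
          c0 = y0 + ∑ i, y i * a0 i ∧ ∀ j, c j = ∑ i, y i * a i j := by
  constructor
  · -- hard direction
    intro hent
    set w : Fin (m + 1) → Fin (r + 1) → ℝ :=
      Fin.cons (Fin.cons 1 0) (fun i => Fin.cons (a0 i) (a i)) with hw
    have hdotcons : ∀ (p : ℝ) (q : Fin r → ℝ) (z : Fin (r+1) → ℝ),
        farkasDot (Fin.cons p q) z = p * z 0 + ∑ j, q j * z j.succ := by
      intro p q z
      simp [farkasDot, Fin.sum_univ_succ]
    have hconic : ∀ z : Fin (r+1) → ℝ, (∀ i, 0 ≤ farkasDot (w i) z) →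
        0 ≤ farkasDot (Fin.cons c0 c) z := by
      intro z hz
      have hz0 : 0 ≤ z 0 := by
        have := hz 0
        rw [hw] at this
        simp only [Fin.cons_zero] at this
        rw [hdotcons] at this
        simpa using this
      have hrow : ∀ i : Fin m, 0 ≤ a0 i * z 0 + ∑ j, a i j * z j.succ := by
        intro i
        have := hz i.succ
        rw [hw] at this
        simp only [Fin.cons_succ] at this
        rwa [hdotcons] at this
      rw [hdotcons]
      rcases lt_or_eq_of_le hz0 with hz0' | hz0'
      · -- z 0 > 0
        have hx := hent (fun j => z j.succ / z 0) ?_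
        · have : c0 + ∑ j, c j * (z j.succ / z 0) = (c0 * z 0 + ∑ j, c j * z j.succ) / z 0 := by
            rw [add_div, mul_div_cancel_right₀ _ (ne_of_gt hz0'), Finset.sum_div]
            congr 1
            exact Finset.sum_congr rfl fun j _ => by field_simp
          rw [this] at hx
          have := mul_nonneg hx (le_of_lt hz0')
          rwa [div_mul_cancel₀ _ (ne_of_gt hz0')] at this
        · intro i
          have : a0 i + ∑ j, a i j * (z j.succ / z 0)
              = (a0 i * z 0 + ∑ j, a i j * z j.succ) / z 0 := by
            rw [add_div, mul_div_cancel_right₀ _ (ne_of_gt hz0'), Finset.sum_div]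
            congr 1
            exact Finset.sum_congr rfl fun j _ => by field_simp
          rw [this]
          exact div_nonneg (hrow i) hz0
      · -- z 0 = 0
        rw [← hz0']; rw [← hz0'] at hrow
        simp only [mul_zero, zero_add] at hrow ⊢
        by_contra hS
        push_neg at hS
        set S := ∑ j, c j * z j.succ with hSdef
        obtain ⟨x, hx⟩ := hsat
        set C := c0 + ∑ j, c j * x j with hC
        have hC0 : 0 ≤ C := hent x hx
        set t := (C + 1) / (-S) with ht
        have ht0 : 0 ≤ t := div_nonneg (by linarith) (by linarith)
        have hfeas : ∀ i, 0 ≤ a0 i + ∑ j, a i j * (x j + t * z j.succ) := by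
          intro i
          have he : a0 i + ∑ j, a i j * (x j + t * z j.succ)
              = (a0 i + ∑ j, a i j * x j) + t * ∑ j, a i j * z j.succ := by
            rw [Finset.mul_sum,
              show (∑ j, a i j * (x j + t * z j.succ))
                = ∑ j, (a i j * x j + t * (a i j * z j.succ)) from
                Finset.sum_congr rfl fun j _ => by ring,
              Finset.sum_add_distrib]
            ring
          rw [he]
          exact add_nonneg (hx i) (mul_nonneg ht0 (hrow i))
        have hcon := hent _ hfeas
        have he : c0 + ∑ j, c j * (x j + t * z j.succ) = C + t * S := by
          rw [hC, hSdef, Finset.mul_sum,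
            show (∑ j, c j * (x j + t * z j.succ))
              = ∑ j, (c j * x j + t * (c j * z j.succ)) from
              Finset.sum_congr rfl fun j _ => by ring,
            Finset.sum_add_distrib]
          ring
        rw [he, ht] at hcon
        have hSne : S ≠ 0 := ne_of_lt hS
        have : (C + 1) / (-S) * S = -(C + 1) := by
          rw [div_mul_eq_mul_div, div_eq_iff (neg_ne_zero.mpr hSne)]
          ring
        rw [this] at hcon
        linarith
    obtain ⟨y', hy', hrep⟩ := farkas_conic (m + 1) w (Fin.cons c0 c) hconic
    refine ⟨y' 0, fun i => y' i.succ, hy' 0, fun i => hy' i.succ, ?_, ?_⟩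
    · have := hrep 0
      rw [Fin.sum_univ_succ] at this
      simp only [hw, Fin.cons_zero, Fin.cons_succ] at this
      simpa using this
    · intro j
      have := hrep j.succ
      rw [Fin.sum_univ_succ] at this
      simp only [hw, Fin.cons_zero, Fin.cons_succ] at this
      simpa using this
  · -- easy direction
    rintro ⟨y0, y, hy0, hy, hc0, hc⟩ x hx
    have hswap : ∑ j, c j * x j = ∑ i, y i * ∑ j, a i j * x j := by
      calc ∑ j, c j * x j = ∑ j, (∑ i, y i * a i j) * x j := by
            exact Finset.sum_congr rfl fun j _ => by rw [hc j]
        _ = ∑ j, ∑ i, y i * a i j * x j := by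
            exact Finset.sum_congr rfl fun j _ => Finset.sum_mul ..
        _ = ∑ i, ∑ j, y i * a i j * x j := Finset.sum_comm
        _ = ∑ i, y i * ∑ j, a i j * x j := by
            refine Finset.sum_congr rfl fun i _ => ?_
            rw [Finset.mul_sum]
            exact Finset.sum_congr rfl fun j _ => by ring
    rw [hswap, hc0, add_assoc, ← Finset.sum_add_distrib]
    have : ∀ i ∈ Finset.univ, (0:ℝ) ≤ y i * a0 i + y i * ∑ j, a i j * x j := by
      intro i _
      rw [← mul_add]
      exact mul_nonneg (hy i) (hx i)
    exact add_nonneg hy0 (Finset.sum_nonneg this)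
end

section
/- Farkas' Lemma (unsatisfiability direction): A system Φ of linear inequalities a_{i,0} + a_{i,1}·x_1 + … + a_{i,r}·x_r ≥ 0 (i = 1,…,m) over ℝ^r is unsatisfiable if and only if there exist non-negative reals y_0, y_1, …, y_m such that the constant term satisfies -1 = y_0 + Σ_{i=1}^m y_i·a_{i,0} and 0 = Σ_{i=1}^m y_i·a_{i,j} for each variable index 1 ≤ j ≤ r. -/
/-!
A certificate is precisely a representation of `(-1, 0)` as a nonnegative combination of the
vectors `(1, 0)` and `(a_{i,0}, a_i)` in `ℝ × ℝ^r`, and any such representation refutes every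
solution (weak duality). Conversely, finitely generated cones are closed: by the conic
Carathéodory argument each point of the cone lies in the cone of a linearly independent
subfamily, which is the image of a closed orthant under a closed embedding. So if `(-1, 0)` is
not in the cone, Hahn–Banach gives a functional `f` that is nonnegative on the generators and
negative at `(-1, 0)`; then `f (1, 0) > 0`, and the remaining coordinates of `f` divided by
`f (1, 0)` solve the system.
-/

open Set Matrix

lemma Fintype.exists_mul_le_and_eq {R ι : Type*} [Field R] [LinearOrder R] [IsStrictOrderedRing R]
    [Fintype ι] {c g : ι → R} (hc : 0 ≤ c) (hg : ∃ i, 0 < g i) :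
    ∃ t p, (∀ i, t * g i ≤ c i) ∧ t * g p = c p := by
  classical
  obtain ⟨p, hp, hmin⟩ := Finset.exists_min_image {i | 0 < g i} (fun i => c i / g i)
    (by simpa [Finset.Nonempty] using hg)
  rw [Finset.mem_filter_univ] at hp
  refine ⟨c p / g p, p, fun i => ?_, div_mul_cancel₀ _ hp.ne'⟩
  rcases lt_or_ge 0 (g i) with hgi | hgi
  · exact (le_div_iff₀ hgi).mp (hmin i ((Finset.mem_filter_univ i).mpr hgi))
  · exact (mul_nonpos_of_nonneg_of_nonpos (div_nonneg (hc p) hp.le) hgi).trans (hc i)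

namespace PointedCone

section Algebra

variable {R E ι : Type*} [Semiring R] [PartialOrder R] [IsOrderedRing R]
  [AddCommMonoid E] [Module R E] [Fintype ι]

lemma coe_hull_range_eq_image (v : ι → E) :
    (hull R (range v) : Set E) = Fintype.linearCombination R v '' Ici 0 := by
  ext x
  simp only [SetLike.mem_coe, Submodule.mem_span_range_iff_exists_fun, mem_image, mem_Ici,
    Fintype.linearCombination_apply]
  constructor
  · rintro ⟨c, rfl⟩
    exact ⟨fun i => c i, fun i => (c i).2, rfl⟩
  · rintro ⟨c, hc, rfl⟩
    exact ⟨fun i => ⟨c i, hc i⟩, rfl⟩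

lemma mem_hull_range_iff {v : ι → E} {x : E} :
    x ∈ hull R (range v) ↔ ∃ c : ι → R, 0 ≤ c ∧ ∑ i, c i • v i = x := by
  simp only [← SetLike.mem_coe, coe_hull_range_eq_image, mem_image, mem_Ici,
    Fintype.linearCombination_apply]

end Algebra

variable {R E : Type*} [Field R] [LinearOrder R] [IsStrictOrderedRing R]
  [AddCommGroup E] [Module R E]

theorem coe_hull_range_eq_iUnion_of_not_linearIndependent {n : ℕ} {v : Fin (n + 1) → E}
    (hv : ¬ LinearIndependent R v) :
    (hull R (range v) : Set E) = ⋃ p : Fin (n + 1), hull R (range (v ∘ p.succAbove)) := by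
  refine subset_antisymm ?_
    (iUnion_subset fun p => Submodule.span_mono (range_comp_subset_range _ _))
  obtain ⟨g, hg, hpos⟩ : ∃ g : Fin (n + 1) → R, ∑ i, g i • v i = 0 ∧ ∃ i, 0 < g i := by
    obtain ⟨g, hg, i, hi⟩ := Fintype.not_linearIndependent_iff.mp hv
    rcases hi.lt_or_gt with hi | hi
    · exact ⟨-g, by simp [hg], i, neg_pos.mpr hi⟩
    · exact ⟨g, hg, i, hi⟩
  rintro x hx
  obtain ⟨c, hc, rfl⟩ := mem_hull_range_iff.mp hx
  obtain ⟨t, p, hle, heq⟩ := Fintype.exists_mul_le_and_eq hc hpos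
  have hsum : ∑ i, (c i - t * g i) • v i = ∑ i, c i • v i := by
    simp only [sub_smul, Finset.sum_sub_distrib, mul_smul, ← Finset.smul_sum, hg, smul_zero,
      sub_zero]
  refine mem_iUnion.mpr ⟨p, mem_hull_range_iff.mpr
    ⟨fun k => c (p.succAbove k) - t * g (p.succAbove k), fun k => sub_nonneg.mpr (hle _), ?_⟩⟩
  rw [← hsum, Fin.sum_univ_succAbove _ p, heq, sub_self, zero_smul, zero_add]
  rfl

section Topology

variable {E : Type*} [AddCommGroup E] [Module ℝ E] [TopologicalSpace E] [IsTopologicalAddGroup E]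
  [ContinuousSMul ℝ E] [T2Space E]

theorem isClosed_hull_range_of_linearIndependent {ι : Type*} [Fintype ι] {v : ι → E}
    (hv : LinearIndependent ℝ v) : IsClosed (hull ℝ (range v) : Set E) := by
  rw [coe_hull_range_eq_image]
  exact (LinearMap.isClosedEmbedding_of_injective (LinearMap.ker_eq_bot.mpr
    (linearIndependent_iff_injective_fintypeLinearCombination.mp hv))).isClosedMap _ isClosed_Ici

theorem isClosed_hull_range {n : ℕ} (v : Fin n → E) : IsClosed (hull ℝ (range v) : Set E) := by
  induction n with
  | zero => exact isClosed_hull_range_of_linearIndependent linearIndependent_empty_type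
  | succ n ih =>
    by_cases hv : LinearIndependent ℝ v
    · exact isClosed_hull_range_of_linearIndependent hv
    · rw [coe_hull_range_eq_iUnion_of_not_linearIndependent hv]
      exact isClosed_iUnion_of_finite fun p => ih _

theorem isClosed_of_fg {C : PointedCone ℝ E} (hC : C.FG) : IsClosed (C : Set E) := by
  obtain ⟨n, v, rfl⟩ := Submodule.fg_iff_exists_fin_generating_family.mp hC
  exact isClosed_hull_range v

theorem hyperplane_separation_point_of_fg [LocallyConvexSpace ℝ E] {C : PointedCone ℝ E}
    (hC : C.FG) {x₀ : E} (hx₀ : x₀ ∉ C) : ∃ f : StrongDual ℝ E, (∀ x ∈ C, 0 ≤ f x) ∧ f x₀ < 0 :=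
  ProperCone.hyperplane_separation_point ⟨C, isClosed_of_fg hC⟩ hx₀

end Topology

end PointedCone

section LinearInequalities

variable {ι κ : Type*}

lemma dotProduct_nonneg_of_feasible [Fintype ι] [Fintype κ] {a : Matrix ι κ ℝ} {a0 y : ι → ℝ}
    {x : κ → ℝ} (hx : 0 ≤ a0 + a *ᵥ x) (hy : 0 ≤ y) (hya : y ᵥ* a = 0) : 0 ≤ y ⬝ᵥ a0 :=
  calc 0 ≤ y ⬝ᵥ (a0 + a *ᵥ x) := dotProduct_nonneg_of_nonneg hy hx
    _ = y ⬝ᵥ a0 := by rw [dotProduct_add, dotProduct_mulVec, hya, zero_dotProduct, add_zero]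

def homogenizedRows (a0 : ι → ℝ) (a : ι → κ → ℝ) : Option ι → ℝ × (κ → ℝ)
  | none => (1, 0)
  | some i => (a0 i, a i)

lemma exists_certificate_of_mem_hull [Fintype ι] {a0 : ι → ℝ} {a : ι → κ → ℝ}
    (h : ((-1 : ℝ), (0 : κ → ℝ)) ∈ PointedCone.hull ℝ (range (homogenizedRows a0 a))) :
    ∃ (y0 : ℝ) (y : ι → ℝ), 0 ≤ y0 ∧ (∀ i, 0 ≤ y i) ∧
      (-1 : ℝ) = y0 + ∑ i, y i * a0 i ∧ ∀ j, (0 : ℝ) = ∑ i, y i * a i j := by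
  obtain ⟨c, hc, hsum⟩ := PointedCone.mem_hull_range_iff.mp h
  rw [Fintype.sum_option] at hsum
  refine ⟨c none, fun i => c (some i), hc none, fun i => hc (some i), ?_, fun j => ?_⟩
  · simpa [homogenizedRows, Prod.fst_sum] using (congrArg Prod.fst hsum).symm
  · simpa [homogenizedRows, Prod.snd_sum, Finset.sum_apply] using
      (congrFun (congrArg Prod.snd hsum) j).symm

lemma exists_feasible_of_separating [Fintype κ] {a0 : ι → ℝ} {a : ι → κ → ℝ}
    (f : Module.Dual ℝ (ℝ × (κ → ℝ))) (hf : ∀ k, 0 ≤ f (homogenizedRows a0 a k))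
    (hb : f (-1, 0) < 0) : ∃ x : κ → ℝ, ∀ i, 0 ≤ a0 i + ∑ j, a i j * x j := by
  classical
  have hdecomp : ∀ t v, f (t, v) = t * f (1, 0) + ∑ j, v j * f (0, Pi.single j 1) := by
    intro t v
    have hsplit : ((t, v) : ℝ × (κ → ℝ)) = t • (1, 0) + ∑ j, v j • (0, Pi.single j 1) := by
      ext <;> simp [Prod.fst_sum, Prod.snd_sum, Finset.sum_apply, Pi.single_apply]
    rw [hsplit, map_add, map_smul, map_sum]
    simp only [map_smul, smul_eq_mul]
  have hs : 0 < f (1, 0) := by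
    have := hdecomp (-1) 0
    simp only [Pi.zero_apply, zero_mul, Finset.sum_const_zero, add_zero] at this
    linarith
  refine ⟨fun j => f (0, Pi.single j 1) / f (1, 0), fun i => ?_⟩
  have hrow :
      a0 i + ∑ j, a i j * (f (0, Pi.single j 1) / f (1, 0)) = f (a0 i, a i) / f (1, 0) := by
    rw [hdecomp (a0 i) (a i), add_div, mul_div_cancel_right₀ _ hs.ne', Finset.sum_div]
    simp only [mul_div_assoc]
  rw [hrow]
  exact div_nonneg (hf (some i)) hs.le

end LinearInequalities

/-- Farkas' Lemma (unsatisfiability direction). -/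
theorem farkas_unsat (r m : ℕ) (a : Fin m → Fin r → ℝ) (a0 : Fin m → ℝ) :
    (¬ ∃ x : Fin r → ℝ, ∀ i, 0 ≤ a0 i + ∑ j, a i j * x j)
      ↔ ∃ (y0 : ℝ) (y : Fin m → ℝ), 0 ≤ y0 ∧ (∀ i, 0 ≤ y i) ∧
          (-1 : ℝ) = y0 + ∑ i, y i * a0 i ∧ ∀ j, (0 : ℝ) = ∑ i, y i * a i j := by
  constructor
  · intro hinfeasible
    by_contra hcert
    obtain ⟨f, hf, hb⟩ := PointedCone.hyperplane_separation_point_of_fg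
      (Submodule.fg_span (finite_range (homogenizedRows a0 a)))
      fun h => hcert (exists_certificate_of_mem_hull h)
    exact hinfeasible (exists_feasible_of_separating f
      (fun k => hf _ (Submodule.subset_span (mem_range_self k))) hb)
  · rintro ⟨y0, y, hy0, hy, hcert0, hcert⟩ ⟨x, hx⟩
    have hcost := dotProduct_nonneg_of_feasible (a := a) (x := x) hx hy
      (funext fun j => (hcert j).symm)
    rw [dotProduct] at hcost
    linarith
end
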